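/- Let m, n ≥ 1, let γ, τ, δ > 0 with η := √(τ+γ) < 1/2, let A be a random matrix over F₂^{m×n}, and let B be any bad-set assignment for A. Then Pr[A is (τ,δ)-bad with respect to B] ≤ m·2^{−τ·n} + m·δ·2^{h(η)·m}. -/

import Mathlib

open Finset

open Classical in
/-- Probability of an event for a random matrix over `F₂` with mass function `μ`. -/
noncomputable def prEvt {m n : ℕ} (μ : Matrix (Fin m) (Fin n) (ZMod 2) → ℝ)
    (E : Matrix (Fin m) (Fin n) (ZMod 2) → Prop) : ℝ :=
  ∑ A, if E A then μ A else 0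

/-- `rowsAgree i A B` says that the first `i` rows of `A` and `B` coincide. -/
def rowsAgree {m n : ℕ} (i : ℕ) (A B : Matrix (Fin m) (Fin n) (ZMod 2)) : Prop :=
  ∀ j : Fin m, (j : ℕ) < i → A j = B j

/-- `pIdx μ i A₀` is the conditional probability that row `i` of a `μ`-random matrix equals
row `i` of `A₀`, given that the previous rows agree with those of `A₀`. -/
noncomputable def pIdx {m n : ℕ} (μ : Matrix (Fin m) (Fin n) (ZMod 2) → ℝ)
    (i : Fin m) (A₀ : Matrix (Fin m) (Fin n) (ZMod 2)) : ℝ :=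
  prEvt μ (fun B => B i = A₀ i ∧ rowsAgree (i : ℕ) B A₀)
    / prEvt μ (fun B => rowsAgree (i : ℕ) B A₀)

/-- `qIdx μ i A₀ = -log₂ (pIdx μ i A₀)`. -/
noncomputable def qIdx {m n : ℕ} (μ : Matrix (Fin m) (Fin n) (ZMod 2) → ℝ)
    (i : Fin m) (A₀ : Matrix (Fin m) (Fin n) (ZMod 2)) : ℝ :=
  -Real.logb 2 (pIdx μ i A₀)

/-- `A₀` is `τ`-rare if some conditional row probability is below `2 ^ (-n (1 + τ))`. -/
def tauRare {m n : ℕ} (μ : Matrix (Fin m) (Fin n) (ZMod 2) → ℝ) (τ : ℝ)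
    (A₀ : Matrix (Fin m) (Fin n) (ZMod 2)) : Prop :=
  ∃ i : Fin m, pIdx μ i A₀ < (2 : ℝ) ^ (-((n : ℝ) * (1 + τ)))

/-- A bad-set assignment for the random matrix distributed according to `μ`: every `τ`-rare
matrix in the support is mapped to `⊥` (here `none`) and every non-`τ`-rare matrix in the
support is mapped to a set of at most `√(τ+γ)·m` rows outside of which the conditional
surprise `qᵢ` is at least `(1 - √(τ+γ))·n`. -/
def IsBadSetAssignment {m n : ℕ} (μ : Matrix (Fin m) (Fin n) (ZMod 2) → ℝ) (τ γ : ℝ)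
    (B : Matrix (Fin m) (Fin n) (ZMod 2) → Option (Finset (Fin m))) : Prop :=
  ∀ A₀, 0 < μ A₀ →
    (tauRare μ τ A₀ → B A₀ = none) ∧
    (¬ tauRare μ τ A₀ → ∃ S : Finset (Fin m), B A₀ = some S ∧
      (S.card : ℝ) ≤ Real.sqrt (τ + γ) * (m : ℝ) ∧
      ∀ i : Fin m, i ∉ S → (1 - Real.sqrt (τ + γ)) * (n : ℝ) ≤ qIdx μ i A₀)

/-- `A₀` is `(τ,δ)`-bad with respect to the bad-set assignment `B`: either `A₀` is `τ`-rare,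
or for some `i` the conditional probability that `B` of the random matrix equals `B A₀`, given
that the first `i` rows agree with `A₀`, is below `δ`. -/
def IsTauDeltaBad {m n : ℕ} (μ : Matrix (Fin m) (Fin n) (ZMod 2) → ℝ) (τ δ : ℝ)
    (B : Matrix (Fin m) (Fin n) (ZMod 2) → Option (Finset (Fin m)))
    (A₀ : Matrix (Fin m) (Fin n) (ZMod 2)) : Prop :=
  tauRare μ τ A₀ ∨ ∃ i : Fin m,
    prEvt μ (fun C => B C = B A₀ ∧ rowsAgree (i : ℕ) C A₀)
      / prEvt μ (fun C => rowsAgree (i : ℕ) C A₀) < δ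

/-- The binary entropy function with logarithms in base 2. -/
noncomputable def binEnt (p : ℝ) : ℝ :=
  -(p * Real.logb 2 p) - (1 - p) * Real.logb 2 (1 - p)

/-! Both terms of the bound come from one fact: for any statistic `f` and event `E`, the event
"`E` occurs although `Pr[E | f = f(A)] < δ`" has probability at most `δ`, because inside each
fibre of `f` it is either empty or has conditional probability below `δ`. Taking `f` to be the
first `i` rows, a `τ`-rare matrix lies in such an event for some `i` and `E = {A_i = r}`, `r`
ranging over the `2ⁿ` possible rows, and `2ⁿ · 2^(-n(1+τ)) = 2^(-τn)`. A bad non-rare matrix lies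
in one with `E = {B(A) = S}`, `S` ranging over the sets of size at most `η m`; there are at most
`2^(h(η) m)` of these, since each has mass at least `2^(-h(η) m)` under the `η`-biased measure on
subsets. The union bound over the `m` rows gives the factor `m`. -/

section Probability

variable {m n : ℕ} {μ : Matrix (Fin m) (Fin n) (ZMod 2) → ℝ}

local notation "Mat" => Matrix (Fin m) (Fin n) (ZMod 2)

noncomputable def prCondRows (μ : Mat → ℝ) (k : ℕ) (A : Mat) (E : Mat → Prop) : ℝ :=
  prEvt μ (fun C => E C ∧ rowsAgree k C A) / prEvt μ (fun C => rowsAgree k C A)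

lemma prEvt_nonneg (hμ0 : ∀ A, 0 ≤ μ A) (E : Mat → Prop) : 0 ≤ prEvt μ E :=
  sum_nonneg fun A _ => by split <;> simp [hμ0]

lemma prEvt_mono_of_pos (hμ0 : ∀ A, 0 ≤ μ A) {E F : Mat → Prop}
    (h : ∀ A, 0 < μ A → E A → F A) : prEvt μ E ≤ prEvt μ F := by
  refine sum_le_sum fun A _ => ?_
  rcases (hμ0 A).lt_or_eq with hA | hA
  · split_ifs <;> simp_all
  · split_ifs <;> simp [← hA]

lemma prEvt_or_le (hμ0 : ∀ A, 0 ≤ μ A) (E F : Mat → Prop) :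
    prEvt μ (fun A => E A ∨ F A) ≤ prEvt μ E + prEvt μ F := by
  rw [prEvt, prEvt, prEvt, ← sum_add_distrib]
  refine sum_le_sum fun A _ => ?_
  split_ifs <;> simp_all

lemma prEvt_exists_le {ι : Type*} (hμ0 : ∀ A, 0 ≤ μ A) (s : Finset ι) (E : ι → Mat → Prop) :
    prEvt μ (fun A => ∃ x ∈ s, E x A) ≤ ∑ x ∈ s, prEvt μ (E x) := by
  classical
  simp only [prEvt]
  rw [sum_comm]
  refine sum_le_sum fun A _ => ?_
  split_ifs with hE
  · obtain ⟨x, hx, hEx⟩ := hE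
    calc μ A = if E x A then μ A else 0 := (if_pos hEx).symm
      _ ≤ ∑ y ∈ s, if E y A then μ A else 0 :=
        single_le_sum (f := fun y => if E y A then μ A else 0)
          (fun y _ => by split <;> simp [hμ0]) hx
  · exact sum_nonneg fun y _ => by split <;> simp [hμ0]

lemma sum_prEvt_fiber {β : Type*} [Fintype β] (f : Mat → β) :
    ∑ b, prEvt μ (fun C => f C = b) = ∑ A, μ A := by
  simp only [prEvt]
  rw [sum_comm]
  classical
  exact sum_congr rfl fun A _ => by convert sum_ite_eq univ (f A) (fun _ => μ A); simp

lemma le_mul_of_div_lt_of_le {a b δ : ℝ} (ha : 0 ≤ a) (hab : a ≤ b) (h : a / b < δ) :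
    a ≤ δ * b := by
  rcases (ha.trans hab).lt_or_eq with hb | hb
  · exact ((div_lt_iff₀ hb).1 h).le
  · rw [← hb] at hab ⊢
    rwa [mul_zero]

lemma prEvt_and_condPr_lt_le {β : Type*} [Fintype β] (hμ0 : ∀ A, 0 ≤ μ A)
    (hμ1 : ∑ A, μ A = 1) (f : Mat → β) (E : Mat → Prop) {δ : ℝ} (hδ : 0 ≤ δ) :
    prEvt μ (fun A => E A ∧
      prEvt μ (fun C => E C ∧ f C = f A) / prEvt μ (fun C => f C = f A) < δ) ≤ δ := by
  classical
  set c : β → Prop := fun b => prEvt μ (fun C => E C ∧ f C = b) / prEvt μ (fun C => f C = b) < δ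
  have hfiber : ∀ b, ∑ A ∈ univ with f A = b, (if E A ∧ c (f A) then μ A else 0)
      ≤ δ * prEvt μ (fun C => f C = b) := by
    intro b
    by_cases hb : c b
    · calc _ = prEvt μ (fun C => E C ∧ f C = b) := by
            rw [sum_filter, prEvt]
            refine sum_congr rfl fun A _ => ?_
            by_cases hA : f A = b <;> simp [hA, hb]
        _ ≤ δ * prEvt μ (fun C => f C = b) :=
            le_mul_of_div_lt_of_le (prEvt_nonneg hμ0 _)
              (prEvt_mono_of_pos hμ0 fun _ _ h => h.2) hb
    · refine (sum_eq_zero fun A hA => if_neg ?_).trans_le (mul_nonneg hδ (prEvt_nonneg hμ0 _))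
      rintro ⟨-, hcA⟩
      rw [(mem_filter.1 hA).2] at hcA
      exact hb hcA
  calc _ = ∑ b, ∑ A ∈ (univ : Finset Mat) with f A = b, (if E A ∧ c (f A) then μ A else 0) := by
        rw [sum_fiberwise univ f, prEvt]
        congr! 2
    _ ≤ ∑ b, δ * prEvt μ (fun C => f C = b) := sum_le_sum fun b _ => hfiber b
    _ = δ := by rw [← mul_sum, sum_prEvt_fiber, hμ1, mul_one]

lemma rowsAgree_iff_restrict_eq {k : ℕ} {A B : Mat} :
    rowsAgree k A B ↔
      (fun j : {j : Fin m // (j : ℕ) < k} => A j) = fun j : {j : Fin m // (j : ℕ) < k} => B j :=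
  ⟨fun h => funext fun j => h j j.2, fun h j hj => congrFun h ⟨j, hj⟩⟩

lemma prEvt_and_prCondRows_lt_le (hμ0 : ∀ A, 0 ≤ μ A) (hμ1 : ∑ A, μ A = 1) (k : ℕ)
    (E : Mat → Prop) {δ : ℝ} (hδ : 0 ≤ δ) :
    prEvt μ (fun A => E A ∧ prCondRows μ k A E < δ) ≤ δ := by
  simpa only [prCondRows, rowsAgree_iff_restrict_eq] using
    prEvt_and_condPr_lt_le hμ0 hμ1 (fun A (j : {j : Fin m // (j : ℕ) < k}) => A j) E hδ

lemma prEvt_exists_prCondRows_lt_le {β : Type*} (hμ0 : ∀ A, 0 ≤ μ A) (hμ1 : ∑ A, μ A = 1)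
    (g : Fin m → Mat → β) (s : Finset β) {δ : ℝ} (hδ : 0 ≤ δ) :
    prEvt μ (fun A => ∃ i : Fin m, g i A ∈ s ∧ prCondRows μ i A (fun C => g i C = g i A) < δ)
      ≤ m * (#s * δ) := by
  calc _ ≤ prEvt μ (fun A => ∃ i ∈ univ, ∃ v ∈ s,
          g i A = v ∧ prCondRows μ i A (fun C => g i C = v) < δ) :=
        prEvt_mono_of_pos hμ0 fun A _ ⟨i, hs, hlt⟩ => ⟨i, mem_univ _, g i A, hs, rfl, hlt⟩
    _ ≤ ∑ i : Fin m, ∑ v ∈ s, prEvt μ (fun A =>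
          g i A = v ∧ prCondRows μ i A (fun C => g i C = v) < δ) :=
        (prEvt_exists_le hμ0 univ _).trans (sum_le_sum fun i _ => prEvt_exists_le hμ0 s _)
    _ ≤ ∑ _i : Fin m, ∑ _v ∈ s, δ := by
        gcongr with i _ v _
        exact prEvt_and_prCondRows_lt_le hμ0 hμ1 i _ hδ
    _ = m * (#s * δ) := by simp

lemma prEvt_tauRare_le (hμ0 : ∀ A, 0 ≤ μ A) (hμ1 : ∑ A, μ A = 1) (τ : ℝ) :
    prEvt μ (tauRare μ τ) ≤ m * (2 : ℝ) ^ (-(τ * n)) := by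
  calc _ ≤ prEvt μ (fun A => ∃ i : Fin m, A i ∈ univ ∧
          prCondRows μ i A (fun C => C i = A i) < (2 : ℝ) ^ (-(n * (1 + τ)))) :=
        prEvt_mono_of_pos hμ0 fun A _ ⟨i, hi⟩ => ⟨i, mem_univ _, hi⟩
    _ ≤ m * (#(univ : Finset (Fin n → ZMod 2)) * (2 : ℝ) ^ (-(n * (1 + τ)))) :=
        prEvt_exists_prCondRows_lt_le hμ0 hμ1 (fun i A => A i) univ (by positivity)
    _ = m * (2 : ℝ) ^ (-(τ * n)) := by
        rw [card_univ, Fintype.card_fun, ZMod.card, Fintype.card_fin, Nat.cast_pow,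
          ← Real.rpow_natCast, Nat.cast_ofNat, ← Real.rpow_add two_pos]
        ring_nf

end Probability

lemma two_rpow_neg_binEnt_mul_le {η : ℝ} (hη0 : 0 ≤ η) (hη : η ≤ 1 / 2) {k N : ℕ}
    (hk : (k : ℝ) ≤ η * N) : (2 : ℝ) ^ (-(binEnt η * N)) ≤ η ^ k * (1 - η) ^ (N - k) := by
  have hkN : k ≤ N := by
    have : η * N ≤ N := by nlinarith [N.cast_nonneg (α := ℝ)]
    exact_mod_cast hk.trans this
  rcases hη0.eq_or_lt with rfl | hη0
  · obtain rfl : k = 0 := by exact_mod_cast le_antisymm (by simpa using hk) k.cast_nonneg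
    simp [binEnt]
  have h1η : 0 < 1 - η := by linarith
  set x := η / (1 - η)
  -- `η ^ k * (1 - η) ^ (N - k) = (1 - η) ^ N * x ^ k` decreases in `k` since `x ≤ 1`,
  -- and at `k = η N` it equals `2 ^ (-h(η) N)`.
  calc (2 : ℝ) ^ (-(binEnt η * N)) = (1 - η) ^ (N : ℝ) * x ^ (η * N) := by
        rw [show -(binEnt η * N) = Real.logb 2 (1 - η) * N + Real.logb 2 x * (η * N) by
            rw [binEnt, Real.logb_div hη0.ne' h1η.ne']; ring,
          Real.rpow_add two_pos, Real.rpow_mul two_pos.le, Real.rpow_mul two_pos.le,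
          Real.rpow_logb two_pos (by norm_num) h1η, Real.rpow_logb two_pos (by norm_num)
            (div_pos hη0 h1η)]
    _ ≤ (1 - η) ^ (N : ℝ) * x ^ (k : ℝ) :=
        mul_le_mul_of_nonneg_left (Real.rpow_le_rpow_of_exponent_ge (div_pos hη0 h1η)
          ((div_le_one h1η).2 (by linarith)) hk) (by positivity)
    _ = η ^ k * (1 - η) ^ (N - k) := by
        rw [Real.rpow_natCast, Real.rpow_natCast, div_pow, pow_sub₀ _ h1η.ne' hkN]
        field_simp

lemma card_filter_card_le_mul_le {ι : Type*} [Fintype ι] {η : ℝ} (hη0 : 0 ≤ η)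
    (hη : η ≤ 1 / 2) :
    (#{S : Finset ι | (#S : ℝ) ≤ η * Fintype.card ι} : ℝ)
      ≤ (2 : ℝ) ^ (binEnt η * Fintype.card ι) := by
  set N := Fintype.card ι
  have h1η : 0 ≤ 1 - η := by linarith
  -- The weights `η ^ #S * (1 - η) ^ (N - #S)` sum to `1`, and every small set weighs at least
  -- `2 ^ (-h(η) N)`.
  have hmass : #{S : Finset ι | (#S : ℝ) ≤ η * N} * (2 : ℝ) ^ (-(binEnt η * N)) ≤ 1 :=
    calc _ = ∑ S ∈ {S : Finset ι | (#S : ℝ) ≤ η * N}, (2 : ℝ) ^ (-(binEnt η * N)) := by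
          rw [sum_const, nsmul_eq_mul]
      _ ≤ ∑ S ∈ {S : Finset ι | (#S : ℝ) ≤ η * N}, η ^ #S * (1 - η) ^ (N - #S) :=
          sum_le_sum fun S hS => two_rpow_neg_binEnt_mul_le hη0 hη (mem_filter.1 hS).2
      _ ≤ ∑ S : Finset ι, η ^ #S * (1 - η) ^ (N - #S) :=
          sum_le_sum_of_subset_of_nonneg (subset_univ _) fun _ _ _ => by positivity
      _ = 1 := by rw [Fintype.sum_pow_mul_eq_add_pow, add_sub_cancel, one_pow]
  rwa [Real.rpow_neg zero_le_two, ← div_eq_mul_inv, div_le_one (by positivity)] at hmass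

theorem prob_bad_le_general (m n : ℕ)
    (μ : Matrix (Fin m) (Fin n) (ZMod 2) → ℝ)
    (hμ0 : ∀ A, 0 ≤ μ A) (hμ1 : ∑ A, μ A = 1)
    (γ τ δ : ℝ) (hδ : 0 < δ)
    (hη : Real.sqrt (τ + γ) < 1 / 2)
    (B : Matrix (Fin m) (Fin n) (ZMod 2) → Option (Finset (Fin m)))
    (hB : IsBadSetAssignment μ τ γ B) :
    prEvt μ (IsTauDeltaBad μ τ δ B) ≤
      (m : ℝ) * (2 : ℝ) ^ (-(τ * (n : ℝ)))
        + (m : ℝ) * δ * (2 : ℝ) ^ (binEnt (Real.sqrt (τ + γ)) * (m : ℝ)) := by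
  set η := Real.sqrt (τ + γ)
  set 𝒮 := ({S : Finset (Fin m) | (#S : ℝ) ≤ η * m} : Finset _).map Function.Embedding.some
  have hsplit : prEvt μ (IsTauDeltaBad μ τ δ B) ≤ prEvt μ (tauRare μ τ)
      + prEvt μ (fun A => ∃ i : Fin m, B A ∈ 𝒮 ∧ prCondRows μ i A (fun C => B C = B A) < δ) := by
    refine (prEvt_mono_of_pos hμ0 fun A hA hbad => ?_).trans (prEvt_or_le hμ0 _ _)
    by_cases hrare : tauRare μ τ A
    · exact Or.inl hrare
    obtain ⟨i, hi⟩ := hbad.resolve_left hrare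
    obtain ⟨S, hS, hcard, -⟩ := (hB A hA).2 hrare
    exact Or.inr ⟨i, by simpa [𝒮, hS] using hcard, hi⟩
  have hcard : (#𝒮 : ℝ) ≤ 2 ^ (binEnt η * m) := by
    simpa [𝒮] using card_filter_card_le_mul_le (ι := Fin m) (Real.sqrt_nonneg _) hη.le
  calc _ ≤ m * (2 : ℝ) ^ (-(τ * n)) + m * (#𝒮 * δ) :=
        hsplit.trans (add_le_add (prEvt_tauRare_le hμ0 hμ1 τ)
          (prEvt_exists_prCondRows_lt_le hμ0 hμ1 (fun _ => B) 𝒮 hδ.le))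
    _ = m * (2 : ℝ) ^ (-(τ * n)) + m * δ * #𝒮 := by ring
    _ ≤ _ := by gcongr

/-- The probability that the random matrix is `(τ,δ)`-bad is at most
`m·2^{-τn} + m·δ·2^{h(η)m}` where `η = √(τ+γ)`. -/
theorem prob_bad_le (m n : ℕ) (hm : 1 ≤ m) (hn : 1 ≤ n)
    (μ : Matrix (Fin m) (Fin n) (ZMod 2) → ℝ)
    (hμ0 : ∀ A, 0 ≤ μ A) (hμ1 : ∑ A, μ A = 1)
    (γ τ δ : ℝ) (hγ : 0 < γ) (hτ : 0 < τ) (hδ : 0 < δ)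
    (hη : Real.sqrt (τ + γ) < 1 / 2)
    (B : Matrix (Fin m) (Fin n) (ZMod 2) → Option (Finset (Fin m)))
    (hB : IsBadSetAssignment μ τ γ B) :
    prEvt μ (IsTauDeltaBad μ τ δ B) ≤
      (m : ℝ) * (2 : ℝ) ^ (-(τ * (n : ℝ)))
        + (m : ℝ) * δ * (2 : ℝ) ^ (binEnt (Real.sqrt (τ + γ)) * (m : ℝ)) :=
  prob_bad_le_general m n μ hμ0 hμ1 γ τ δ hδ hη B hB
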